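/- The marginalized MALA proposal density with Uniform[0,1]-randomized step size satisfies Q̄_h(x,y) = ∫₀^1 φ_d(y; x + hz∇log π(x), 2hz I) dz ∝ e^{c}·Ǩ_{1−d/2}(a, b), where a = ‖y−x‖²/(4h), b = h‖∇log π(x)‖²/4, c = ⟨y−x, ∇log π(x)⟩/2, and Ǩ_ν(a,b) := ∫₁^∞ t^{−ν−1}exp(−at − b/t) dt is the upper incomplete modified Bessel function of the second kind. -/
import Mathlib


open Real MeasureTheory
open scoped RealInnerProductSpace

/-- Density of the `d`-dimensional Gaussian with mean `m` and covariance `s·I`. -/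
noncomputable def gaussDens (d : ℕ) (y m : EuclideanSpace ℝ (Fin d)) (s : ℝ) : ℝ :=
  (2 * Real.pi * s) ^ (-(d : ℝ) / 2) * Real.exp (-‖y - m‖ ^ 2 / (2 * s))

/-- The upper incomplete modified Bessel function of the second kind
`Ǩ_ν(a,b) = ∫₁^∞ t^{-ν-1} exp(-at - b/t) dt`. -/
noncomputable def incBesselK (ν a b : ℝ) : ℝ :=
  ∫ t in Set.Ioi (1 : ℝ), t ^ (-ν - 1) * Real.exp (-a * t - b / t)

/-- The marginalized MALA proposal density with `Uniform[0,1]`-randomized step size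
is, up to a normalizing constant depending only on `h` and `d`, equal to
`e^c Ǩ_{1-d/2}(a, b)`. -/
theorem stmt13 (d : ℕ) (hd : 0 < d) (h : ℝ) (hh : 0 < h)
    (p : EuclideanSpace ℝ (Fin d) → ℝ) (hp : ∀ x, 0 < p x)
    (hdiff : Differentiable ℝ fun u => Real.log (p u)) :
    ∃ C > (0 : ℝ), ∀ x y : EuclideanSpace ℝ (Fin d), y ≠ x →
      (∫ z in Set.Ioo (0 : ℝ) 1,
          gaussDens d y (x + (h * z) • gradient (fun u => Real.log (p u)) x) (2 * h * z))
        = C * Real.exp (⟪y - x, gradient (fun u => Real.log (p u)) x⟫ / 2) *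
            incBesselK (1 - (d : ℝ) / 2) (‖y - x‖ ^ 2 / (4 * h))
              (h * ‖gradient (fun u => Real.log (p u)) x‖ ^ 2 / 4) := by
  refine ⟨(2 * Real.pi * (2 * h)) ^ (-(d : ℝ) / 2), Real.rpow_pos_of_pos (by positivity) _, ?_⟩
  intro x y hxy
  set g := gradient (fun u => Real.log (p u)) x with hg
  set C : ℝ := (2 * Real.pi * (2 * h)) ^ (-(d : ℝ) / 2) with hC
  have himg : (fun t : ℝ => t⁻¹) '' Set.Ioi 1 = Set.Ioo 0 1 := by
    ext z
    constructor
    · rintro ⟨t, ht, rfl⟩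
      simp only [Set.mem_Ioi] at ht
      exact ⟨inv_pos.2 (lt_trans one_pos ht), inv_lt_one_of_one_lt₀ ht⟩
    · rintro ⟨hz0, hz1⟩
      exact ⟨z⁻¹, Set.mem_Ioi.2 (one_lt_inv₀ hz0 |>.2 hz1), inv_inv z⟩
  have hsub : (∫ z in Set.Ioo (0 : ℝ) 1, gaussDens d y (x + (h * z) • g) (2 * h * z))
      = ∫ t in Set.Ioi (1 : ℝ),
          |(-(t ^ 2)⁻¹)| • gaussDens d y (x + (h * t⁻¹) • g) (2 * h * t⁻¹) := by
    rw [← himg]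
    exact MeasureTheory.integral_image_eq_integral_abs_deriv_smul measurableSet_Ioi
      (fun t ht => (hasDerivAt_inv (ne_of_gt (lt_trans one_pos ht))).hasDerivWithinAt)
      (inv_injective.injOn) _
  rw [hsub, incBesselK, ← MeasureTheory.integral_const_mul]
  refine MeasureTheory.setIntegral_congr_fun measurableSet_Ioi ?_
  intro t ht
  simp only [Set.mem_Ioi] at ht
  have ht0 : (0 : ℝ) < t := lt_trans one_pos ht
  have htne : t ≠ 0 := ne_of_gt ht0
  -- Step A: the power factor
  have hA : (2 * Real.pi * (2 * h * t⁻¹)) ^ (-(d : ℝ) / 2)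
      = C * t ^ ((d : ℝ) / 2) := by
    have : 2 * Real.pi * (2 * h * t⁻¹) = (2 * Real.pi * (2 * h)) * t⁻¹ := by ring
    rw [this, Real.mul_rpow (by positivity) (by positivity),
      Real.inv_rpow ht0.le, ← Real.rpow_neg ht0.le, hC, neg_div, neg_neg]
  -- Step B: the norm expansion
  have hB : ‖y - (x + (h * t⁻¹) • g)‖ ^ 2
      = ‖y - x‖ ^ 2 - 2 * (h * t⁻¹) * ⟪y - x, g⟫ + (h * t⁻¹) ^ 2 * ‖g‖ ^ 2 := by
    rw [sub_add_eq_sub_sub, @norm_sub_sq_real, real_inner_smul_right, norm_smul]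
    rw [mul_pow, Real.norm_eq_abs, sq_abs]
    ring
  -- Step C: the exponent identity
  have hC' : -‖y - (x + (h * t⁻¹) • g)‖ ^ 2 / (2 * (2 * h * t⁻¹))
      = ⟪y - x, g⟫ / 2 + (-(‖y - x‖ ^ 2 / (4 * h)) * t - h * ‖g‖ ^ 2 / 4 / t) := by
    rw [hB]
    field_simp
    ring
  -- Step D: assemble
  have hD : t ^ (-(1 - (d : ℝ) / 2) - 1) = t ^ ((d : ℝ) / 2) * (t ^ 2)⁻¹ := by
    have h2 : (t ^ 2)⁻¹ = t ^ (-2 : ℝ) := by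
      rw [Real.rpow_neg ht0.le, Real.rpow_two]
    rw [h2, ← Real.rpow_add ht0]
    ring_nf
  simp only [smul_eq_mul, gaussDens]
  rw [ hA, hC', Real.exp_add, abs_neg, abs_inv, abs_pow, abs_of_pos ht0,
    hD]
  ring
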